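/- arXiv:1005.4425 — 5 statements merged into one kernel-verified Lean document; each statement's English description precedes it below -/
import Mathlib

section
/- The function t ↦ log I₀(t) is differentiable on [0, ∞) with |d/dt log I₀(t)| ≤ 1 for all t ≥ 0, and there is an absolute constant B such that |log I₀(t)| ≤ B·t² for 0 ≤ t < 1 and |log I₀(t) − t| ≤ B·log(t+1) for t ≥ 1. -/
open Complex MeasureTheory Filter Set

/-- The modified Bessel function of order `0`. -/
noncomputable def besselI0 (t : ℝ) : ℝ := ∑' n : ℕ, (t / 2) ^ (2 * n) / (n.factorial : ℝ) ^ 2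

/-- The constant `C₁`. -/
noncomputable def Cone : ℝ :=
    (∫ t in Set.Ioc (0 : ℝ) 1, Real.log (besselI0 t) / t ^ 2) +
      ∫ t in Set.Ioi (1 : ℝ), (Real.log (besselI0 t) - t) / t ^ 2

/-- `∑_{p ≤ x} arctan (1/√(p²-1))`. -/
noncomputable def primeArctanSum (x : ℝ) : ℝ :=
    ∑ p ∈ (Finset.range (⌊x⌋₊ + 1)).filter Nat.Prime,
      Real.arctan (1 / Real.sqrt ((p : ℝ) ^ 2 - 1))

/-- The constant `C₂`. -/
noncomputable def Ctwo : ℝ :=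
    limUnder atTop fun x : ℝ => primeArctanSum x - Real.log (Real.log x)

/-- The series `∑_p ∑_{n ≥ 1} χ(p)^n / (n p^{n s})` defining `log L(s,χ)` for `Re s > 1`. -/
noncomputable def logLSeries {q : ℕ} (χ : DirichletCharacter ℂ q) (s : ℂ) : ℂ :=
    ∑' (p : Nat.Primes) (n : ℕ),
      χ ((p : ℕ) : ZMod q) ^ (n + 1) / ((n + 1) * ((p : ℕ) : ℂ) ^ ((n + 1 : ℕ) * s))

/-- `w` is the value of `log L(1,χ)` obtained by continuous variation of the series
`log L(σ,χ)` along the real segment `σ ∈ [1,∞)`. -/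
def IsLogL1 {q : ℕ} (χ : DirichletCharacter ℂ q) (w : ℂ) : Prop :=
    ∃ g : ℝ → ℂ, ContinuousOn g (Set.Ici 1) ∧
      (∀ σ : ℝ, 1 < σ → g σ = logLSeries χ (σ : ℂ)) ∧ g 1 = w

/-- `log L(1,χ)`, defined by continuous variation along the real axis. -/
noncomputable def logL1 {q : ℕ} (χ : DirichletCharacter ℂ q) : ℂ :=
    Classical.epsilon (IsLogL1 χ)

/-- `arg L(1,χ)`. -/
noncomputable def argL1 {q : ℕ} (χ : DirichletCharacter ℂ q) : ℝ := (logL1 χ).im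

/-- The distribution function `Ψ_q(τ)`. -/
noncomputable def Psi (q : ℕ) (τ : ℝ) : ℝ :=
    (Nat.card {χ : DirichletCharacter ℂ q // χ ≠ 1 ∧ τ < argL1 χ} : ℝ) / q.totient

/-- `χ` is exceptional (relative to the constant `c`). -/
def IsExceptional (c : ℝ) {q : ℕ} [NeZero q] (χ : DirichletCharacter ℂ q) : Prop :=
    ∃ s : ℂ, 1 - c / Real.log (q * (|s.im| + 2)) ≤ s.re ∧
      DirichletCharacter.LFunction χ s = 0

/-- The `z`-th divisor function `d_z(n)`. -/
noncomputable def dC (z : ℂ) (n : ℕ) : ℂ :=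
    if n = 0 then 0 else
      ∏ p ∈ n.primeFactors,
        (∏ i ∈ Finset.range (n.factorization p), (z + i)) / ((n.factorization p).factorial : ℂ)

/-- Iterated logarithms. -/
noncomputable def log₂ (x : ℝ) : ℝ := Real.log (Real.log x)
noncomputable def log₃ (x : ℝ) : ℝ := Real.log (log₂ x)
noncomputable def log₄ (x : ℝ) : ℝ := Real.log (log₃ x)

/-- The radius `R(q)`. -/
noncomputable def Rq (q : ℕ) : ℝ := Real.log q * log₄ q / (10 * log₂ q * log₃ q)



/-- The conjugate character `χ̄`. -/
noncomputable def conjChar {q : ℕ} (χ : DirichletCharacter ℂ q) : DirichletCharacter ℂ q :=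
    χ.ringHomComp (starRingEnd ℂ)

/-- `L(1,χ)^z := exp(z · log L(1,χ))`. -/
noncomputable def L1pow {q : ℕ} (χ : DirichletCharacter ℂ q) (z : ℂ) : ℂ :=
    Complex.exp (z * logL1 χ)

/-- The moments `M_q(z₁,z₂)`, relative to the constant `c` defining exceptional characters. -/
noncomputable def moment (c : ℝ) (q : ℕ) [NeZero q] (z₁ z₂ : ℂ) : ℂ :=
    (q.totient : ℂ)⁻¹ *
      ∑ᶠ χ ∈ {χ : DirichletCharacter ℂ q | χ ≠ 1 ∧ ¬ IsExceptional c χ},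
        L1pow χ z₁ * L1pow (conjChar χ) z₂

/-- The `j`-fold divisor function (number of ordered factorizations into `j` parts). -/
def dNat (j : ℕ) (n : ℕ) : ℕ :=
    if n = 0 then 0 else
      ∏ p ∈ n.primeFactors, Nat.choose (j + n.factorization p - 1) (n.factorization p)

/-- The divisor function `d_k(n)` for real `k`. -/
noncomputable def dR (k : ℝ) (n : ℕ) : ℝ :=
    if n = 0 then 0 else
      ∏ p ∈ n.primeFactors,
        (∏ i ∈ Finset.range (n.factorization p), (k + i)) / ((n.factorization p).factorial : ℝ)

/-- The distribution function `Φ_q(τ)`. -/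
noncomputable def Phi (q : ℕ) (τ : ℝ) : ℝ :=
    (Nat.card {χ : DirichletCharacter ℂ q // χ ≠ 1 ∧ argL1 χ < -τ} : ℝ) / q.totient


/-!
Writing `xₙ = (t/2)ⁿ/n!`, the series are `I₀ = ∑ xₙ²` and `I₁ = ∑ xₙxₙ₊₁`, so `|I₁| ≤ I₀` by
AM-GM, and `(log I₀)' = I₁/I₀` has modulus at most `1`. The coefficient of `t²ⁿ` in `I₀` is
`C(2n,n)/4ⁿ` times that of `cosh`, and `4ⁿ/(2n+1) ≤ C(2n,n) ≤ 4ⁿ`; hence `I₀ ≤ cosh` and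
`sinh t ≤ t I₀(t)`. Thus `eᵗ ≤ (2t+1) I₀(t)`, while `I₀(t) ≤ cosh t ≤ min(eᵗ, e^{t²/2})`.
-/

open scoped Nat

lemma abs_tsum_mul_succ_le_tsum_sq {x : ℕ → ℝ} (hx : Summable fun n => x n ^ 2) :
    |∑' n, x n * x (n + 1)| ≤ ∑' n, x n ^ 2 := by
  have hx' : Summable fun n => x (n + 1) ^ 2 := (summable_nat_add_iff 1).mpr hx
  have hamgm : ∀ n, ‖x n * x (n + 1)‖ ≤ (x n ^ 2 + x (n + 1) ^ 2) / 2 := fun n => by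
    have := two_mul_le_add_sq |x n| |x (n + 1)|
    rw [sq_abs, sq_abs] at this
    rw [Real.norm_eq_abs, abs_mul]
    linarith
  have habs : Summable fun n => ‖x n * x (n + 1)‖ :=
    .of_nonneg_of_le (fun _ => norm_nonneg _) hamgm ((hx.add hx').div_const 2)
  calc |∑' n, x n * x (n + 1)| ≤ ∑' n, ‖x n * x (n + 1)‖ := by
        rw [← Real.norm_eq_abs]; exact norm_tsum_le_tsum_norm habs
    _ ≤ ∑' n, (x n ^ 2 + x (n + 1) ^ 2) / 2 :=
        habs.tsum_le_tsum hamgm ((hx.add hx').div_const 2)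
    _ = (∑' n, x n ^ 2 + ∑' n, x (n + 1) ^ 2) / 2 := by rw [tsum_div_const, hx.tsum_add hx']
    _ ≤ ∑' n, x n ^ 2 := by linarith [hx.tsum_eq_zero_add, sq_nonneg (x 0)]

lemma summable_besselI0_term (t : ℝ) :
    Summable fun n : ℕ => (t / 2) ^ (2 * n) / (n ! : ℝ) ^ 2 := by
  refine .of_nonneg_of_le (fun n => by rw [pow_mul]; positivity) (fun n => ?_)
    (Real.summable_pow_div_factorial ((t / 2) ^ 2))
  rw [pow_mul]
  gcongr
  exact le_self_pow₀ (mod_cast n.factorial_pos) two_ne_zero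

lemma hasSum_besselI0 (t : ℝ) :
    HasSum (fun n : ℕ => (t / 2) ^ (2 * n) / (n ! : ℝ) ^ 2) (besselI0 t) :=
  (summable_besselI0_term t).hasSum

lemma one_le_besselI0 (t : ℝ) : 1 ≤ besselI0 t := by
  simpa using le_hasSum (hasSum_besselI0 t) 0 fun n _ => by rw [pow_mul]; positivity

lemma besselI0_pos (t : ℝ) : 0 < besselI0 t := one_pos.trans_le (one_le_besselI0 t)

lemma log_besselI0_nonneg (t : ℝ) : 0 ≤ Real.log (besselI0 t) :=
  Real.log_nonneg (one_le_besselI0 t)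

noncomputable def besselI1 (t : ℝ) : ℝ := ∑' n : ℕ, (t / 2) ^ (2 * n + 1) / (n ! * (n + 1)! : ℝ)

lemma hasDerivAt_besselI0_term_succ (n : ℕ) (y : ℝ) :
    HasDerivAt (fun u => (u / 2) ^ (2 * (n + 1)) / ((n + 1)! : ℝ) ^ 2)
      ((y / 2) ^ (2 * n + 1) / (n ! * (n + 1)! : ℝ)) y := by
  refine ((((hasDerivAt_id' y).div_const 2).pow (2 * (n + 1))).div_const _).congr_deriv ?_
  rw [show 2 * (n + 1) - 1 = 2 * n + 1 by omega, Nat.factorial_succ]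
  push_cast
  field_simp

lemma norm_besselI1_term_le {R y : ℝ} (hy : |y| ≤ R) (n : ℕ) :
    ‖(y / 2) ^ (2 * n + 1) / (n ! * (n + 1)! : ℝ)‖ ≤ R * ((R ^ 2) ^ n / n !) := by
  have hR : 0 ≤ R := (abs_nonneg y).trans hy
  have hy2 : |y / 2| ≤ R := by rw [abs_div, abs_two]; linarith [abs_nonneg y]
  have hfact : (0 : ℝ) < n ! * (n + 1)! := by positivity
  rw [Real.norm_eq_abs, abs_div, abs_pow, abs_of_pos hfact, ← pow_mul, ← mul_div_assoc, ← pow_succ']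
  gcongr
  exact le_mul_of_one_le_right (by positivity) (mod_cast (n + 1).factorial_pos)

lemma hasDerivAt_besselI0 (t : ℝ) : HasDerivAt besselI0 (besselI1 t) t := by
  have hshift : besselI0 = fun u => 1 + ∑' n : ℕ, (u / 2) ^ (2 * (n + 1)) / ((n + 1)! : ℝ) ^ 2 :=
    funext fun u => by simp [besselI0, (summable_besselI0_term u).tsum_eq_zero_add]
  have ht : t ∈ Ioo (-(|t| + 1)) (|t| + 1) := abs_lt.mp (lt_add_one _)
  rw [hshift]
  exact (hasDerivAt_tsum_of_isPreconnected
    ((Real.summable_pow_div_factorial _).mul_left (|t| + 1)) isOpen_Ioo isPreconnected_Ioo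
    (fun n y _ => hasDerivAt_besselI0_term_succ n y)
    (fun n y hy => norm_besselI1_term_le (abs_lt.mpr hy).le n) ht
    ((summable_nat_add_iff 1).mpr (summable_besselI0_term t)) ht).const_add 1

lemma abs_besselI1_le (t : ℝ) : |besselI1 t| ≤ besselI0 t := by
  have hsq : ∀ n : ℕ, ((t / 2) ^ n / n ! : ℝ) ^ 2 = (t / 2) ^ (2 * n) / (n ! : ℝ) ^ 2 :=
    fun n => by ring
  have hI1 : besselI1 t = ∑' n : ℕ, ((t / 2) ^ n / n ! : ℝ) * ((t / 2) ^ (n + 1) / (n + 1)! : ℝ) :=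
    tsum_congr fun n => by ring
  have hI0 : besselI0 t = ∑' n : ℕ, ((t / 2) ^ n / n ! : ℝ) ^ 2 := tsum_congr fun n => (hsq n).symm
  rw [hI1, hI0]
  exact abs_tsum_mul_succ_le_tsum_sq ((summable_besselI0_term t).congr fun n => (hsq n).symm)

lemma hasDerivAt_log_besselI0 (t : ℝ) :
    HasDerivAt (fun u => Real.log (besselI0 u)) (besselI1 t / besselI0 t) t :=
  (hasDerivAt_besselI0 t).log (besselI0_pos t).ne'

lemma besselI0_term_eq_centralBinom_mul (t : ℝ) (n : ℕ) :
    (t / 2) ^ (2 * n) / (n ! : ℝ) ^ 2 =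
      (n.centralBinom / 4 ^ n : ℝ) * (t ^ (2 * n) / (2 * n)! : ℝ) := by
  have hfact : ((2 * n)! : ℝ) = n.centralBinom * n ! * n ! := by
    rw [Nat.centralBinom_eq_two_mul_choose, two_mul]
    exact_mod_cast (Nat.add_choose_mul_factorial_mul_factorial n n).symm
  have hbinom : (n.centralBinom : ℝ) ≠ 0 := mod_cast n.centralBinom_ne_zero
  rw [hfact, div_pow, pow_mul, pow_mul, show (2 : ℝ) ^ 2 = 4 by norm_num]
  field_simp

lemma besselI0_le_cosh (t : ℝ) : besselI0 t ≤ Real.cosh t := by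
  refine hasSum_le (fun n => ?_) (hasSum_besselI0 t) (Real.hasSum_cosh t)
  rw [besselI0_term_eq_centralBinom_mul]
  refine mul_le_of_le_one_left (by rw [pow_mul]; positivity) ?_
  rw [div_le_one (by positivity)]
  exact_mod_cast n.centralBinom_le_four_pow

lemma sinh_le_mul_besselI0 {t : ℝ} (ht : 0 ≤ t) : Real.sinh t ≤ t * besselI0 t := by
  refine hasSum_le (fun n => ?_) (Real.hasSum_sinh t) ((hasSum_besselI0 t).mul_left t)
  have hbinom : (1 / (2 * n + 1) : ℝ) ≤ n.centralBinom / 4 ^ n := by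
    rw [div_le_div_iff₀ (by positivity) (by positivity), one_mul, mul_comm]
    exact_mod_cast n.four_pow_le_two_mul_add_one_mul_central_binom
  rw [besselI0_term_eq_centralBinom_mul, Nat.factorial_succ, pow_succ]
  calc t ^ (2 * n) * t / (((2 * n + 1) * (2 * n)! : ℕ) : ℝ)
      = t * (t ^ (2 * n) / (2 * n)! : ℝ) * (1 / (2 * n + 1)) := by push_cast; field_simp
    _ ≤ t * (t ^ (2 * n) / (2 * n)! : ℝ) * (n.centralBinom / 4 ^ n) := by gcongr
    _ = t * ((n.centralBinom / 4 ^ n : ℝ) * (t ^ (2 * n) / (2 * n)! : ℝ)) := by ring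

lemma exp_le_mul_besselI0 {t : ℝ} (ht : 0 ≤ t) : Real.exp t ≤ (2 * t + 1) * besselI0 t := by
  have hsinh := sinh_le_mul_besselI0 ht
  have hexp_neg : Real.exp (-t) ≤ 1 := Real.exp_le_one_iff.mpr (by linarith)
  rw [Real.sinh_eq] at hsinh
  linarith [one_le_besselI0 t]

lemma log_besselI0_le_sq_div_two (t : ℝ) : Real.log (besselI0 t) ≤ t ^ 2 / 2 :=
  calc Real.log (besselI0 t) ≤ Real.log (Real.cosh t) :=
        Real.log_le_log (besselI0_pos t) (besselI0_le_cosh t)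
    _ ≤ Real.log (Real.exp (t ^ 2 / 2)) :=
        Real.log_le_log (Real.cosh_pos t) (Real.cosh_le_exp_half_sq t)
    _ = t ^ 2 / 2 := Real.log_exp _

lemma abs_log_besselI0_sub_le {t : ℝ} (ht : 0 ≤ t) :
    |Real.log (besselI0 t) - t| ≤ Real.log (2 * t + 1) := by
  have hcosh : Real.cosh t ≤ Real.exp t := by
    rw [Real.cosh_eq]
    linarith [Real.exp_le_exp.mpr (show -t ≤ t by linarith)]
  have hupper : Real.log (besselI0 t) ≤ t := by
    simpa using Real.log_le_log (besselI0_pos t) ((besselI0_le_cosh t).trans hcosh)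
  have hlower : t ≤ Real.log (2 * t + 1) + Real.log (besselI0 t) := by
    rw [← Real.log_mul (by positivity) (besselI0_pos t).ne']
    simpa using Real.log_le_log (Real.exp_pos t) (exp_le_mul_besselI0 ht)
  have hlog : 0 ≤ Real.log (2 * t + 1) := Real.log_nonneg (by linarith)
  rw [abs_le]
  constructor <;> linarith

/-- **Lemma 3.1.** `log I₀(t)` is differentiable on `[0,∞)` with derivative bounded by `1`,
`log I₀(t) = O(t²)` for `0 ≤ t < 1`, and `log I₀(t) = t + O(log(t+1))` for `t ≥ 1`. -/
theorem log_besselI0_estimates :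
    ∃ B : ℝ,
      (∀ t : ℝ, 0 ≤ t → DifferentiableAt ℝ (fun u : ℝ => Real.log (besselI0 u)) t ∧
        |deriv (fun u : ℝ => Real.log (besselI0 u)) t| ≤ 1) ∧
      (∀ t : ℝ, 0 ≤ t → t < 1 → |Real.log (besselI0 t)| ≤ B * t ^ 2) ∧
      (∀ t : ℝ, 1 ≤ t → |Real.log (besselI0 t) - t| ≤ B * Real.log (t + 1)) := by
  refine ⟨2, fun t _ => ?_, fun t _ _ => ?_, fun t ht => ?_⟩
  · have hlog := hasDerivAt_log_besselI0 t
    refine ⟨hlog.differentiableAt, ?_⟩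
    rw [hlog.deriv, abs_div, abs_of_pos (besselI0_pos t)]
    exact div_le_one_of_le₀ (abs_besselI1_le t) (besselI0_pos t).le
  · rw [abs_of_nonneg (log_besselI0_nonneg t)]
    linarith [log_besselI0_le_sq_div_two t, sq_nonneg t]
  · calc |Real.log (besselI0 t) - t| ≤ Real.log (2 * t + 1) :=
          abs_log_besselI0_sub_le (by linarith)
      _ ≤ Real.log ((t + 1) ^ 2) := Real.log_le_log (by linarith) (by nlinarith)
      _ = 2 * Real.log (t + 1) := by rw [Real.log_pow]; norm_num
end

section
/- For every prime p, all complex numbers z₁, z₂, and every real σ > 1/2, one has ∑_{a=0}^∞ d_{z₁}(p^a) d_{z₂}(p^a) / p^{2σa} = (1/2π) ∫_{−π}^{π} (1 − e^{iθ}/p^σ)^{−z₁} (1 − e^{−iθ}/p^σ)^{−z₂} dθ, where (1−w)^{−z} := exp(−z·Log(1−w)) with Log the principal branch of the logarithm (note |e^{±iθ}/p^σ| < 1). -/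
open Complex MeasureTheory Filter Set

/-! Both factors of the integrand are binomial series in `e^{±iθ}/p^σ`, absolutely convergent
because `p^{-σ} < 1`, whose coefficients are `multichoose z a = d_z(p^a)`. Multiplying them out
and integrating term by term, orthogonality of `e^{i(m-n)θ}` on `[-π, π]` keeps only the diagonal
`m = n`. -/

theorem Ring.multichoose_eq_prod_div {K : Type*} [Field K] [CharZero K] (z : K) (n : ℕ) :
    Ring.multichoose z n = (∏ i ∈ Finset.range n, (z + i)) / n.factorial := by
  have hprod : (ascPochhammer ℕ n).smeval z = ∏ i ∈ Finset.range n, (z + i) := by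
    rw [Polynomial.ascPochhammer_smeval_eq_eval]
    induction n with
    | zero => simp
    | succ n ih => rw [ascPochhammer_succ_eval, ih, Finset.prod_range_succ]
  rw [eq_div_iff (by exact_mod_cast n.factorial_ne_zero), ← hprod,
    ← Ring.factorial_nsmul_multichoose_eq_ascPochhammer, nsmul_eq_mul, mul_comm]

theorem dC_prime_pow {p : ℕ} (hp : p.Prime) (z : ℂ) (a : ℕ) :
    dC z (p ^ a) = Ring.multichoose z a := by
  rcases Nat.eq_zero_or_pos a with rfl | ha
  · simp [dC]
  rw [dC, if_neg (pow_ne_zero a hp.ne_zero), Nat.primeFactors_prime_pow ha.ne' hp,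
    hp.factorization_pow, Finset.prod_singleton, Finsupp.single_eq_same,
    Ring.multichoose_eq_prod_div]

theorem mem_eball_zero_one_of_norm_lt_one {E : Type*} [SeminormedAddGroup E] {w : E}
    (hw : ‖w‖ < 1) : w ∈ Metric.eball (0 : E) 1 := by
  rw [mem_eball_zero_iff, ← ofReal_norm]
  exact ENNReal.ofReal_lt_one.mpr hw

theorem hasSum_multichoose_mul_pow (z : ℂ) {w : ℂ} (hw : ‖w‖ < 1) :
    HasSum (fun n ↦ Ring.multichoose z n * w ^ n) ((1 - w) ^ (-z)) := by
  have h := (one_div_one_sub_cpow_hasFPowerSeriesOnBall_zero z).hasSum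
    (mem_eball_zero_one_of_norm_lt_one hw)
  simpa [FormalMultilinearSeries.ofScalars_apply_eq, Ring.multichoose_eq, cpow_neg, mul_comm]
    using h

theorem summable_norm_multichoose_mul_pow (z : ℂ) {w : ℂ} (hw : ‖w‖ < 1) :
    Summable (fun n ↦ ‖Ring.multichoose z n * w ^ n‖) := by
  have h := FormalMultilinearSeries.summable_norm_apply _ <| Metric.eball_subset_eball
    (one_div_one_sub_cpow_hasFPowerSeriesOnBall_zero z).r_le
    (mem_eball_zero_one_of_norm_lt_one hw)
  simpa [FormalMultilinearSeries.ofScalars_apply_eq, Ring.multichoose_eq, mul_comm] using h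

theorem norm_inv_natCast_cpow_lt_one {p : ℕ} (hp : 1 < p) {σ : ℝ} (hσ : 0 < σ) :
    ‖((p : ℂ) ^ (σ : ℂ))⁻¹‖ < 1 := by
  rw [norm_inv, norm_natCast_cpow_of_pos (by omega), ofReal_re]
  exact inv_lt_one_of_one_lt₀ (Real.one_lt_rpow (by exact_mod_cast hp) hσ)

theorem norm_exp_neg_ofReal_mul_I (θ : ℝ) : ‖exp (-θ * I)‖ = 1 := by
  rw [← ofReal_neg, norm_exp_ofReal_mul_I]

theorem integral_exp_mul_I_pow_mul_exp_neg_mul_I_pow (m n : ℕ) :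
    ∫ θ in -Real.pi..Real.pi, exp (θ * I) ^ m * exp (-θ * I) ^ n =
      if m = n then ((2 * Real.pi : ℝ) : ℂ) else 0 := by
  have hexp : ∀ θ : ℝ, exp (θ * I) ^ m * exp (-θ * I) ^ n = exp (((m - n : ℤ) * I) * θ) := by
    intro θ
    rw [← exp_nat_mul, ← exp_nat_mul, ← exp_add]
    push_cast
    ring_nf
  simp_rw [hexp]
  split_ifs with hmn
  · simp [hmn, two_mul]
  · have hk : ((m - n : ℤ) : ℂ) * I ≠ 0 := by
      have : (m : ℤ) - n ≠ 0 := sub_ne_zero.mpr (by exact_mod_cast hmn)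
      exact mul_ne_zero (by exact_mod_cast this) I_ne_zero
    have hper : exp (((m - n : ℤ) * I) * Real.pi) = exp (((m - n : ℤ) * I) * (-Real.pi : ℝ)) := by
      rw [exp_eq_exp_iff_exists_int]
      exact ⟨m - n, by push_cast; ring⟩
    rw [integral_exp_mul_complex hk, hper, sub_self, zero_div]

theorem integral_tsum_mul_tsum_exp {a b : ℕ → ℂ} (ha : Summable (fun m ↦ ‖a m‖))
    (hb : Summable (fun n ↦ ‖b n‖)) :
    ∫ θ in -Real.pi..Real.pi, (∑' m, a m * exp (θ * I) ^ m) * (∑' n, b n * exp (-θ * I) ^ n) =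
      ((2 * Real.pi : ℝ) : ℂ) * ∑' n, a n * b n := by
  set F : ℕ × ℕ → ℝ → ℂ := fun q θ ↦ a q.1 * exp (θ * I) ^ q.1 * (b q.2 * exp (-θ * I) ^ q.2)
  have hnorm_a : ∀ θ : ℝ, (fun m ↦ ‖a m * exp (θ * I) ^ m‖) = fun m ↦ ‖a m‖ := fun θ ↦ by
    simp only [norm_mul, norm_pow, norm_exp_ofReal_mul_I, one_pow, mul_one]
  have hnorm_b : ∀ θ : ℝ, (fun n ↦ ‖b n * exp (-θ * I) ^ n‖) = fun n ↦ ‖b n‖ := fun θ ↦ by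
    simp only [norm_mul, norm_pow, norm_exp_neg_ofReal_mul_I, one_pow, mul_one]
  have hF_sum : ∀ θ : ℝ, HasSum (fun q ↦ F q θ)
      ((∑' m, a m * exp (θ * I) ^ m) * (∑' n, b n * exp (-θ * I) ^ n)) := fun θ ↦ by
    rw [← hnorm_a θ] at ha
    rw [← hnorm_b θ] at hb
    rw [tsum_mul_tsum_of_summable_norm ha hb]
    exact (summable_mul_of_summable_norm ha hb).hasSum
  have hbound : Summable (fun q : ℕ × ℕ ↦ ‖a q.1‖ * ‖b q.2‖) :=
    Summable.mul_of_nonneg (f := fun m ↦ ‖a m‖) (g := fun n ↦ ‖b n‖) ha hb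
      (fun _ ↦ norm_nonneg _) (fun _ ↦ norm_nonneg _)
  have hint : HasSum (fun q ↦ ∫ θ in -Real.pi..Real.pi, F q θ) (∫ θ in -Real.pi..Real.pi,
      (∑' m, a m * exp (θ * I) ^ m) * (∑' n, b n * exp (-θ * I) ^ n)) :=
    intervalIntegral.hasSum_integral_of_dominated_convergence (fun q _ ↦ ‖a q.1‖ * ‖b q.2‖)
      (fun q ↦ (by fun_prop : Continuous (F q)).aestronglyMeasurable)
      (fun q ↦ .of_forall fun θ _ ↦ by
        rw [norm_mul, congrFun (hnorm_a θ), congrFun (hnorm_b θ)])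
      (.of_forall fun _ _ ↦ hbound) intervalIntegrable_const (.of_forall fun θ _ ↦ hF_sum θ)
  have hint_F : ∀ q : ℕ × ℕ, ∫ θ in -Real.pi..Real.pi, F q θ =
      if q.1 = q.2 then ((2 * Real.pi : ℝ) : ℂ) * (a q.1 * b q.2) else 0 := fun q ↦ by
    simp only [F, mul_mul_mul_comm (a q.1), intervalIntegral.integral_const_mul,
      integral_exp_mul_I_pow_mul_exp_neg_mul_I_pow]
    split_ifs <;> ring
  have hdiag_inj : Function.Injective (fun n : ℕ ↦ (n, n)) := fun m n h ↦ congrArg Prod.fst h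
  have hab : Summable (fun n ↦ a n * b n) :=
    (summable_mul_of_summable_norm ha hb).comp_injective (i := fun n : ℕ ↦ (n, n)) hdiag_inj
  have hdiag : HasSum (fun q : ℕ × ℕ ↦ ∫ θ in -Real.pi..Real.pi, F q θ)
      (((2 * Real.pi : ℝ) : ℂ) * ∑' n, a n * b n) := by
    simp_rw [hint_F]
    refine (hdiag_inj.hasSum_iff fun ⟨m, n⟩ hmn ↦ if_neg fun h ↦ hmn ⟨m, Prod.ext rfl h⟩).mp ?_
    simpa [Function.comp_def] using hab.hasSum.mul_left _
  exact hint.unique hdiag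

/-- **Lemma 3.2.** For all `z₁, z₂ ∈ ℂ` and `σ > 1/2`,
`∑_{a ≥ 0} d_{z₁}(p^a) d_{z₂}(p^a)/p^{2σa}
  = (1/2π) ∫_{-π}^{π} (1 - e^{iθ}/p^σ)^{-z₁} (1 - e^{-iθ}/p^σ)^{-z₂} dθ`. -/
theorem euler_factor_integral_representation :
    ∀ p : ℕ, p.Prime → ∀ z₁ z₂ : ℂ, ∀ σ : ℝ, 1 / 2 < σ →
      ∑' a : ℕ, dC z₁ (p ^ a) * dC z₂ (p ^ a) / (((p : ℝ) ^ (2 * σ * a) : ℝ) : ℂ) =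
        ((2 * Real.pi : ℝ) : ℂ)⁻¹ *
          ∫ θ in (-Real.pi)..Real.pi,
            (1 - Complex.exp (θ * Complex.I) / (p : ℂ) ^ (σ : ℂ)) ^ (-z₁) *
              (1 - Complex.exp (-θ * Complex.I) / (p : ℂ) ^ (σ : ℂ)) ^ (-z₂) := by
  intro p hp z₁ z₂ σ hσ
  set s : ℂ := ((p : ℂ) ^ (σ : ℂ))⁻¹
  have hs : ‖s‖ < 1 := norm_inv_natCast_cpow_lt_one hp.one_lt (by linarith)
  have hexpand : ∀ z u : ℂ, ‖u‖ = 1 →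
      (1 - u / (p : ℂ) ^ (σ : ℂ)) ^ (-z) = ∑' n, Ring.multichoose z n * s ^ n * u ^ n := by
    intro z u hu
    rw [div_eq_mul_inv, ← (hasSum_multichoose_mul_pow z (by rwa [norm_mul, hu, one_mul])).tsum_eq]
    exact tsum_congr fun n ↦ by ring
  have hterm : ∀ a : ℕ, dC z₁ (p ^ a) * dC z₂ (p ^ a) / (((p : ℝ) ^ (2 * σ * a) : ℝ) : ℂ) =
      Ring.multichoose z₁ a * s ^ a * (Ring.multichoose z₂ a * s ^ a) := by
    intro a
    rw [dC_prime_pow hp, dC_prime_pow hp, div_eq_mul_inv, ofReal_cpow (by positivity),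
      ofReal_natCast, show ((2 * σ * a : ℝ) : ℂ) = (2 * a : ℕ) * (σ : ℂ) by push_cast; ring,
      cpow_nat_mul, ← inv_pow, pow_mul']
    ring
  rw [tsum_congr hterm, intervalIntegral.integral_congr fun θ _ ↦ by
      rw [hexpand z₁ _ (norm_exp_ofReal_mul_I θ), hexpand z₂ _ (norm_exp_neg_ofReal_mul_I θ)],
    integral_tsum_mul_tsum_exp (summable_norm_multichoose_mul_pow z₁ hs)
      (summable_norm_multichoose_mul_pow z₂ hs),
    inv_mul_cancel_left₀ (by simp [Real.pi_ne_zero])]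
end

section
/- For every integer j ≥ 1 and every real X > 3, ∑_{n=1}^∞ (d_j(n)/n) e^{−n/X} ≤ (log 3X)^j. -/
open Complex MeasureTheory Filter Set

/-!
Put `r = e^{-1/X}`, so that the series is `∑ d_j(n) rⁿ / n`. Since `d_{j+1} = d_j * ζ` and
`a + b ≤ ab + 1` for `a, b ≥ 1`, we have `r^{ab} ≤ r⁻¹ rᵃ rᵇ`, so the series for `d_{j+1}` is at most
`r⁻¹` times the product of the series for `d_j` and for `ζ`, and the latter is `-log (1 - r)`.
Hence the sum is at most `(e^{1/X} (-log (1 - e^{-1/X})))^j`, and for `X > 3` this base is at most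
`log 3X` by elementary estimates (`1 - e^{-u} ≥ u e^{-u}` and `e^u ≤ 1 / (1 - u)`).
-/

open ArithmeticFunction Finset
open scoped ArithmeticFunction.zeta

theorem zeta_pow_apply_prime_pow {p : ℕ} (hp : p.Prime) (j a : ℕ) :
    ((ζ : ArithmeticFunction ℕ) ^ j) (p ^ a) = j.multichoose a := by
  induction j generalizing a with
  | zero =>
    rcases a with _ | a
    · simp
    · simp [one_apply, hp.ne_one, Nat.multichoose_zero_succ]
  | succ j ih =>
    rw [pow_succ, mul_zeta_apply, Nat.sum_divisors_prime_pow hp, sum_congr rfl fun i _ => ih i,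
      Nat.sum_range_multichoose, Nat.multichoose_eq, add_right_comm, Nat.add_sub_cancel, add_comm a j]
    exact Nat.choose_symm_add

theorem dNat_eq_zeta_pow_apply (j n : ℕ) : dNat j n = ((ζ : ArithmeticFunction ℕ) ^ j) n := by
  rcases eq_or_ne n 0 with rfl | hn
  · simp [dNat]
  rw [isMultiplicative_zeta.pow.multiplicative_factorization _ hn, dNat, if_neg hn,
    Finsupp.prod, Nat.support_factorization]
  refine prod_congr rfl fun p hp => ?_
  rw [zeta_pow_apply_prime_pow (Nat.prime_of_mem_primeFactors hp), Nat.multichoose_eq]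

theorem sum_range_sum_divisorsAntidiagonal_le {M : Type*} [AddCommMonoid M] [PartialOrder M]
    [IsOrderedAddMonoid M] (F : ℕ × ℕ → M) (hF : ∀ x, 0 ≤ F x) (N : ℕ) :
    ∑ n ∈ range N, ∑ x ∈ n.divisorsAntidiagonal, F x ≤ ∑ x ∈ range N ×ˢ range N, F x :=
  calc ∑ n ∈ range N, ∑ x ∈ n.divisorsAntidiagonal, F x
      ≤ ∑ n ∈ range N, ∑ x ∈ range N ×ˢ range N with x.1 * x.2 = n, F x := by
        refine sum_le_sum fun n hn => sum_le_sum_of_subset_of_nonneg (fun x hx => ?_)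
          fun x _ _ => hF x
        have hxn := (Nat.mem_divisorsAntidiagonal.mp hx).1
        have h1 := Nat.divisor_le (Nat.fst_mem_divisors_of_mem_antidiagonal hx)
        have h2 := Nat.divisor_le (Nat.snd_mem_divisors_of_mem_antidiagonal hx)
        simp only [mem_filter, mem_product, Finset.mem_range] at hn ⊢
        exact ⟨⟨by omega, by omega⟩, hxn⟩
    _ ≤ ∑ x ∈ range N ×ˢ range N, F x :=
        sum_fiberwise_le_sum_of_sum_fiber_nonneg fun _ _ => sum_nonneg fun x _ => hF x

theorem pow_mul_le_inv_mul_pow_add {r : ℝ} (hr0 : 0 < r) (hr1 : r ≤ 1) {a b : ℕ}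
    (ha : a ≠ 0) (hb : b ≠ 0) : r ^ (a * b) ≤ r⁻¹ * r ^ (a + b) := by
  rw [le_inv_mul_iff₀ hr0, ← pow_succ']
  refine pow_le_pow_of_le_one hr0.le hr1 ?_
  obtain ⟨a, rfl⟩ := Nat.exists_eq_succ_of_ne_zero ha
  obtain ⟨b, rfl⟩ := Nat.exists_eq_succ_of_ne_zero hb
  nlinarith

noncomputable def smoothedPartialSum (f : ArithmeticFunction ℕ) (r : ℝ) (N : ℕ) : ℝ :=
  ∑ n ∈ range N, (f n : ℝ) / n * r ^ n

theorem smoothedPartialSum_nonneg (f : ArithmeticFunction ℕ) {r : ℝ} (hr : 0 ≤ r) (N : ℕ) :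
    0 ≤ smoothedPartialSum f r N :=
  sum_nonneg fun _ _ => by positivity

theorem smoothedPartialSum_mul_le (f g : ArithmeticFunction ℕ) {r : ℝ} (hr0 : 0 < r) (hr1 : r ≤ 1)
    (N : ℕ) : smoothedPartialSum (f * g) r N ≤
      r⁻¹ * (smoothedPartialSum f r N * smoothedPartialSum g r N) := by
  have hterm : ∀ x : ℕ × ℕ, (f x.1 * g x.2 : ℝ) / ↑(x.1 * x.2) * r ^ (x.1 * x.2) ≤
      r⁻¹ * ((f x.1 : ℝ) / x.1 * r ^ x.1 * ((g x.2 : ℝ) / x.2 * r ^ x.2)) := by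
    rintro ⟨a, b⟩
    rcases eq_or_ne a 0 with rfl | ha
    · simp
    rcases eq_or_ne b 0 with rfl | hb
    · simp
    calc (f a * g b : ℝ) / ↑(a * b) * r ^ (a * b)
        ≤ (f a * g b : ℝ) / ↑(a * b) * (r⁻¹ * r ^ (a + b)) := by
          gcongr; exact pow_mul_le_inv_mul_pow_add hr0 hr1 ha hb
      _ = _ := by push_cast; rw [pow_add]; field_simp
  calc smoothedPartialSum (f * g) r N
      = ∑ n ∈ range N, ∑ x ∈ n.divisorsAntidiagonal,
          (f x.1 * g x.2 : ℝ) / ↑(x.1 * x.2) * r ^ (x.1 * x.2) := by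
        refine sum_congr rfl fun n _ => ?_
        rw [mul_apply, Nat.cast_sum, sum_div, sum_mul]
        refine sum_congr rfl fun x hx => ?_
        rw [(Nat.mem_divisorsAntidiagonal.mp hx).1, Nat.cast_mul]
    _ ≤ ∑ x ∈ range N ×ˢ range N, (f x.1 * g x.2 : ℝ) / ↑(x.1 * x.2) * r ^ (x.1 * x.2) :=
        sum_range_sum_divisorsAntidiagonal_le _ (fun _ => by positivity) N
    _ ≤ ∑ x ∈ range N ×ˢ range N,
          r⁻¹ * ((f x.1 : ℝ) / x.1 * r ^ x.1 * ((g x.2 : ℝ) / x.2 * r ^ x.2)) :=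
        sum_le_sum fun x _ => hterm x
    _ = _ := by rw [← mul_sum, sum_product, smoothedPartialSum, smoothedPartialSum, sum_mul_sum]

theorem smoothedPartialSum_pow_succ_le (f : ArithmeticFunction ℕ) {r : ℝ} (hr0 : 0 < r)
    (hr1 : r ≤ 1) (j N : ℕ) :
    smoothedPartialSum (f ^ (j + 1)) r N ≤ r⁻¹ ^ j * smoothedPartialSum f r N ^ (j + 1) := by
  induction j with
  | zero => simp
  | succ j ih =>
    calc smoothedPartialSum (f ^ (j + 1 + 1)) r N
        ≤ r⁻¹ * (smoothedPartialSum (f ^ (j + 1)) r N * smoothedPartialSum f r N) := by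
          rw [pow_succ]; exact smoothedPartialSum_mul_le _ _ hr0 hr1 N
      _ ≤ r⁻¹ * (r⁻¹ ^ j * smoothedPartialSum f r N ^ (j + 1) * smoothedPartialSum f r N) := by
          gcongr; exact smoothedPartialSum_nonneg f hr0.le N
      _ = r⁻¹ ^ (j + 1) * smoothedPartialSum f r N ^ (j + 1 + 1) := by ring

theorem smoothedPartialSum_zeta_le {r : ℝ} (hr0 : 0 ≤ r) (hr1 : r < 1) (N : ℕ) :
    smoothedPartialSum ζ r N ≤ -Real.log (1 - r) := by
  have hsum : HasSum (fun n : ℕ => ((ζ : ArithmeticFunction ℕ) n : ℝ) / n * r ^ n)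
      (-Real.log (1 - r)) := by
    refine (hasSum_nat_add_iff' 1).mp ?_
    simpa [zeta_apply_ne, div_eq_inv_mul]
      using Real.hasSum_pow_div_log_of_abs_lt_one (by rwa [abs_of_nonneg hr0])
  exact sum_le_hasSum _ (fun _ _ => by positivity) hsum

theorem neg_log_one_sub_exp_neg_le {u : ℝ} (hu : 0 < u) :
    -Real.log (1 - Real.exp (-u)) ≤ u - Real.log u := by
  have h : u * Real.exp (-u) ≤ 1 - Real.exp (-u) := by
    have := Real.add_one_le_exp u
    rw [Real.exp_neg]
    field_simp
    linarith
  have := Real.log_le_log (by positivity) h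
  rw [Real.log_mul hu.ne' (Real.exp_pos _).ne', Real.log_exp] at this
  linarith

theorem exp_inv_mul_neg_log_one_sub_exp_neg_inv_le {X : ℝ} (hX : 3 < X) :
    Real.exp X⁻¹ * -Real.log (1 - Real.exp (-X⁻¹)) ≤ Real.log (3 * X) := by
  have hX0 : 0 < X := by linarith
  have hexp : Real.exp X⁻¹ ≤ X / (X - 1) := by
    have := Real.exp_bound_div_one_sub_of_interval (x := X⁻¹) (by positivity)
      (inv_lt_one_of_one_lt₀ (by linarith))
    have hX1 : X - 1 ≠ 0 := by linarith
    rwa [show 1 / (1 - X⁻¹) = X / (X - 1) by field_simp] at this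
  have hlog3 : 1 ≤ Real.log 3 := by linarith [Real.log_three_gt_d9]
  have hlogX : Real.log X ≤ Real.log 3 + X / 3 - 1 := by
    have := Real.log_le_sub_one_of_pos (x := X / 3) (by positivity)
    rw [Real.log_div hX0.ne' three_ne_zero] at this
    linarith
  have hlogX0 : 0 ≤ Real.log X := Real.log_nonneg (by linarith)
  calc Real.exp X⁻¹ * -Real.log (1 - Real.exp (-X⁻¹))
      ≤ Real.exp X⁻¹ * (X⁻¹ + Real.log X) := by
        grw [neg_log_one_sub_exp_neg_le (inv_pos.mpr hX0), Real.log_inv, sub_neg_eq_add]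
    _ ≤ X / (X - 1) * (X⁻¹ + Real.log X) := by gcongr
    _ ≤ Real.log 3 + Real.log X := by
      rw [div_mul_eq_mul_div, div_le_iff₀ (by linarith), mul_add, mul_inv_cancel₀ hX0.ne']
      nlinarith
    _ = Real.log (3 * X) := (Real.log_mul three_ne_zero hX0.ne').symm

theorem smoothedPartialSum_zeta_pow_le {X : ℝ} (hX : 3 < X) (k N : ℕ) :
    smoothedPartialSum (ζ ^ (k + 1)) (Real.exp (-X⁻¹)) N ≤ Real.log (3 * X) ^ (k + 1) := by
  set r := Real.exp (-X⁻¹)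
  have hr0 : 0 < r := Real.exp_pos _
  have hr1 : r < 1 := Real.exp_lt_one_iff.mpr (neg_lt_zero.mpr (inv_pos.mpr (by linarith)))
  have hL0 := smoothedPartialSum_nonneg ζ hr0.le N
  calc smoothedPartialSum (ζ ^ (k + 1)) r N
      ≤ r⁻¹ ^ k * smoothedPartialSum ζ r N ^ (k + 1) :=
        smoothedPartialSum_pow_succ_le ζ hr0 hr1.le k N
    _ ≤ (r⁻¹ * smoothedPartialSum ζ r N) ^ (k + 1) := by
      rw [mul_pow]
      gcongr
      exacts [one_le_inv₀ hr0 |>.mpr hr1.le, k.le_succ]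
    _ ≤ Real.log (3 * X) ^ (k + 1) := by
      gcongr
      calc r⁻¹ * smoothedPartialSum ζ r N ≤ r⁻¹ * -Real.log (1 - r) := by
            gcongr; exact smoothedPartialSum_zeta_le hr0.le hr1 N
        _ ≤ Real.log (3 * X) := by
            rw [← Real.exp_neg, neg_neg]; exact exp_inv_mul_neg_log_one_sub_exp_neg_inv_le hX

/-- Inequality (3.1): for an integer `j ≥ 1` and `X > 3`,
`∑_{n ≥ 1} (d_j(n)/n) e^{-n/X} ≤ (log 3X)^j`. -/
theorem divisor_sum_smoothed_bound :
    ∀ j : ℕ, 1 ≤ j → ∀ X : ℝ, 3 < X →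
      (Summable fun n : ℕ => (dNat j n : ℝ) / n * Real.exp (-(n : ℝ) / X)) ∧
      ∑' n : ℕ, (dNat j n : ℝ) / n * Real.exp (-(n : ℝ) / X) ≤ Real.log (3 * X) ^ j := by
  intro j hj X hX
  obtain ⟨k, rfl⟩ := Nat.exists_eq_add_of_le' hj
  have hterm (n : ℕ) : (dNat (k + 1) n : ℝ) / n * Real.exp (-(n : ℝ) / X) =
      (((ζ : ArithmeticFunction ℕ) ^ (k + 1)) n : ℝ) / n * Real.exp (-X⁻¹) ^ n := by
    rw [dNat_eq_zeta_pow_apply, ← Real.exp_nat_mul]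
    ring_nf
  have hbound (N : ℕ) : ∑ n ∈ range N, (dNat (k + 1) n : ℝ) / n * Real.exp (-(n : ℝ) / X) ≤
      Real.log (3 * X) ^ (k + 1) := by
    simpa only [hterm, smoothedPartialSum] using smoothedPartialSum_zeta_pow_le hX k N
  have hnonneg (n : ℕ) : 0 ≤ (dNat (k + 1) n : ℝ) / n * Real.exp (-(n : ℝ) / X) := by positivity
  exact ⟨summable_of_sum_range_le hnonneg hbound, Real.tsum_le_of_sum_range_le hnonneg hbound⟩
end

section
/- Let p be a prime and s > 0 a real number, and define g_s(θ) := (1 − e^{iθ}/p)^{−s/(2i)} (1 − e^{−iθ}/p)^{s/(2i)} for θ ∈ [−π, π], using principal-branch powers. Then g_s is a real-valued, positive, continuous function on [−π, π], and with θ_p := arccos(1/p) one has min_{θ∈[−π,π]} g_s(θ) = g_s(−θ_p) = exp( −s·arctan(1/√(p²−1)) ) and max_{θ∈[−π,π]} g_s(θ) = g_s(θ_p) = exp( s·arctan(1/√(p²−1)) ). -/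
open Complex MeasureTheory Filter Set

/-- The function `g_s(θ) = (1 - e^{iθ}/p)^{-s/2i} (1 - e^{-iθ}/p)^{s/2i}` of Lemma 3.5. -/
noncomputable def gfun (p : ℕ) (s θ : ℝ) : ℂ :=
    (1 - Complex.exp (θ * Complex.I) / p) ^ (-((s : ℂ) / (2 * Complex.I))) *
      (1 - Complex.exp (-θ * Complex.I) / p) ^ ((s : ℂ) / (2 * Complex.I))

/-!
Writing `z = 1 - e^{iθ}/p`, the second factor of `g_s` is a power of `conj z`, and since
`Re z > 0` the principal logarithms satisfy `log (conj z) = conj (log z)`. The exponents then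
combine to `g_s(θ) = exp(-s arg z) = exp(s arctan(sin θ / (p - cos θ)))`, which is real, positive
and continuous. By Cauchy–Schwarz, `sin θ · √(p² - 1) + cos θ ≤ p`, so
`|sin θ / (p - cos θ)| ≤ 1 / √(p² - 1)`, with equality at `θ = ±arccos(1/p)`; as `s > 0`,
`g_s` is extremal exactly there.
-/

open ComplexConjugate

lemma Complex.arg_eq_arctan_of_re_pos {z : ℂ} (hz : 0 < z.re) :
    z.arg = Real.arctan (z.im / z.re) := by
  have h := abs_lt.mp (abs_arg_lt_pi_div_two_iff.mpr (Or.inl hz))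
  rw [← tan_arg, Real.arctan_tan h.1 h.2]

lemma Complex.cpow_neg_mul_conj_cpow {z : ℂ} (hz : z ≠ 0) (harg : z.arg ≠ Real.pi) (s : ℝ) :
    z ^ (-((s : ℂ) / (2 * I))) * conj z ^ ((s : ℂ) / (2 * I)) =
      ((Real.exp (-s * z.arg) : ℝ) : ℂ) := by
  have hconj : conj (log z) = log z - ((2 * z.arg : ℝ) : ℂ) * I := by
    rw [← log_im, ← sub_conj]; ring
  rw [cpow_def_of_ne_zero hz, cpow_def_of_ne_zero ((map_ne_zero _).mpr hz), ← exp_add,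
    log_conj z harg, hconj, ofReal_exp]
  congr 1
  field_simp
  push_cast
  ring

section

variable {a : ℝ}

lemma re_one_sub_exp_mul_I_div_pos (ha : 1 < a) (θ : ℝ) :
    0 < (1 - exp (θ * I) / a).re := by
  have hcos : (1 - exp (θ * I) / a).re = 1 - Real.cos θ / a := by
    simp only [sub_re, one_re, div_ofReal_re, exp_ofReal_mul_I_re]
  rw [hcos, sub_pos, div_lt_one (by linarith)]
  linarith [Real.cos_le_one θ]

lemma arg_one_sub_exp_mul_I_div (ha : 1 < a) (θ : ℝ) :
    (1 - exp (θ * I) / a).arg = -Real.arctan (Real.sin θ / (a - Real.cos θ)) := by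
  have ha0 : a ≠ 0 := by linarith
  have hden : a - Real.cos θ ≠ 0 := by linarith [Real.cos_le_one θ]
  rw [arg_eq_arctan_of_re_pos (re_one_sub_exp_mul_I_div_pos ha θ), ← Real.arctan_neg]
  congr 1
  simp only [sub_re, sub_im, one_re, one_im, div_ofReal_re, div_ofReal_im,
    exp_ofReal_mul_I_re, exp_ofReal_mul_I_im]
  field_simp
  ring

lemma sin_div_sub_cos_le (ha : 1 < a) (θ : ℝ) :
    Real.sin θ / (a - Real.cos θ) ≤ 1 / √(a ^ 2 - 1) := by
  have hu0 : 0 < √(a ^ 2 - 1) := Real.sqrt_pos.mpr (by nlinarith)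
  have hu2 : √(a ^ 2 - 1) ^ 2 = a ^ 2 - 1 := Real.sq_sqrt (by nlinarith)
  have hden : 0 < a - Real.cos θ := by linarith [Real.cos_le_one θ]
  rw [div_le_div_iff₀ hden hu0]
  nlinarith [Real.sin_sq_add_cos_sq θ, sq_nonneg (Real.sin θ - Real.cos θ * √(a ^ 2 - 1)),
    sq_nonneg (Real.sin θ * √(a ^ 2 - 1) + Real.cos θ - a)]

lemma abs_sin_div_sub_cos_le (ha : 1 < a) (θ : ℝ) :
    |Real.sin θ / (a - Real.cos θ)| ≤ 1 / √(a ^ 2 - 1) := by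
  refine abs_le.mpr ⟨?_, sin_div_sub_cos_le ha θ⟩
  have h := sin_div_sub_cos_le ha (-θ)
  rw [Real.sin_neg, Real.cos_neg, neg_div] at h
  linarith

lemma sin_div_sub_cos_arccos_inv (ha : 1 < a) :
    Real.sin (Real.arccos (1 / a)) / (a - Real.cos (Real.arccos (1 / a))) =
      1 / √(a ^ 2 - 1) := by
  have ha0 : 0 < a := by linarith
  have hinv : 1 / a ≤ 1 := (div_le_one ha0).mpr ha.le
  have hsin : 1 - (1 / a) ^ 2 = (√(a ^ 2 - 1) / a) ^ 2 := by
    rw [div_pow √(a ^ 2 - 1), Real.sq_sqrt (by nlinarith)]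
    field_simp
  have hden : a - 1 / a = (a ^ 2 - 1) / a := by field_simp
  rw [Real.sin_arccos, Real.cos_arccos (by linarith [one_div_pos.mpr ha0]) hinv, hsin,
    Real.sqrt_sq (by positivity), hden, div_div_div_cancel_right₀ ha0.ne',
    Real.sqrt_div_self']

end

lemma gfun_eq_exp_arctan {p : ℕ} (hp : 1 < p) (s θ : ℝ) :
    gfun p s θ = ((Real.exp (s * Real.arctan (Real.sin θ / (p - Real.cos θ))) : ℝ) : ℂ) := by
  have hp' : (1 : ℝ) < p := by exact_mod_cast hp
  have hre := re_one_sub_exp_mul_I_div_pos hp' θ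
  rw [ofReal_natCast] at hre
  have hconj : 1 - exp (-θ * I) / p = conj (1 - exp (θ * I) / p) := by
    rw [map_sub, map_one, map_div₀, ← exp_conj, map_mul, conj_ofReal, conj_I, conj_natCast]
    ring_nf
  have hz : 1 - exp (θ * I) / p ≠ 0 := fun h => by simp [h] at hre
  have harg : (1 - exp (θ * I) / p).arg ≠ Real.pi :=
    (arg_lt_pi_iff.mpr (Or.inl hre.le)).ne
  have hz_arg := arg_one_sub_exp_mul_I_div hp' θ
  rw [ofReal_natCast] at hz_arg
  rw [gfun, hconj, cpow_neg_mul_conj_cpow hz harg, hz_arg, neg_mul_neg]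

/-- **Lemma 3.5.** For `s > 0`, `g_s` is a real-valued positive continuous function on
`[-π, π]`, with minimum `g_s(-θ_p) = exp(-s arctan(1/√(p²-1)))` and maximum
`g_s(θ_p) = exp(s arctan(1/√(p²-1)))`, where `θ_p = arccos(1/p)`. -/
theorem gfun_min_max :
    ∀ p : ℕ, p.Prime → ∀ s : ℝ, 0 < s →
      (∀ θ ∈ Set.Icc (-Real.pi) Real.pi, (gfun p s θ).im = 0 ∧ 0 < (gfun p s θ).re) ∧
      ContinuousOn (fun θ : ℝ => gfun p s θ) (Set.Icc (-Real.pi) Real.pi) ∧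
      (gfun p s (-Real.arccos (1 / p))).re =
        Real.exp (-(s * Real.arctan (1 / Real.sqrt ((p : ℝ) ^ 2 - 1)))) ∧
      (gfun p s (Real.arccos (1 / p))).re =
        Real.exp (s * Real.arctan (1 / Real.sqrt ((p : ℝ) ^ 2 - 1))) ∧
      ∀ θ ∈ Set.Icc (-Real.pi) Real.pi,
        (gfun p s (-Real.arccos (1 / p))).re ≤ (gfun p s θ).re ∧
          (gfun p s θ).re ≤ (gfun p s (Real.arccos (1 / p))).re := by
  intro p hp s hs
  have hp' : (1 : ℝ) < p := by exact_mod_cast hp.one_lt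
  have hg := gfun_eq_exp_arctan hp.one_lt s
  have hmax := sin_div_sub_cos_arccos_inv hp'
  have hmin : Real.sin (-Real.arccos (1 / p)) / (p - Real.cos (-Real.arccos (1 / p))) =
      -(1 / √((p : ℝ) ^ 2 - 1)) := by
    rw [Real.sin_neg, Real.cos_neg, neg_div, hmax]
  simp only [hg, ofReal_re, ofReal_im, hmax, hmin, Real.arctan_neg, mul_neg, Real.exp_le_exp]
  refine ⟨fun θ _ => ⟨trivial, Real.exp_pos _⟩, ?_, trivial, trivial, fun θ _ => ?_⟩
  · have hden (θ : ℝ) : (p : ℝ) - Real.cos θ ≠ 0 := by linarith [Real.cos_le_one θ]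
    exact (continuous_ofReal.comp (Real.continuous_exp.comp (continuous_const.mul
      (Real.continuous_arctan.comp (Real.continuous_sin.div
        (continuous_const.sub Real.continuous_cos) hden))))).continuousOn
  · obtain ⟨hlo, hhi⟩ := abs_le.mp (abs_sin_div_sub_cos_le hp' θ)
    have hlo' := Real.arctan_mono hlo
    rw [Real.arctan_neg] at hlo'
    exact ⟨by simpa only [mul_neg] using mul_le_mul_of_nonneg_left hlo' hs.le,
      mul_le_mul_of_nonneg_left (Real.arctan_mono hhi) hs.le⟩
end

section
/- For every prime p and every real θ, | ∑_{n=1}^∞ sin(nθ)/(p^n n) | ≤ arctan( 1/√(p²−1) ). -/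
open Complex MeasureTheory Filter Set

/-!
Put `z = e^{iθ}/p`. The series is the imaginary part of `∑ zⁿ/n = -log (1 - z)`, i.e. it equals
`-arg (1 - z)`. Since `1 - z` lies in the closed disc of radius `|z| = 1/p` about `1`, its argument
is at most `arcsin (1/p) = arctan (1/√(p² - 1))` in absolute value.
-/

lemma Complex.abs_im_le_norm_mul_norm_one_sub (z : ℂ) : |z.im| ≤ ‖z‖ * ‖1 - z‖ := by
  have hsq : (‖z‖ * ‖1 - z‖) ^ 2 = z.im ^ 2 + (z.re - ‖z‖ ^ 2) ^ 2 := by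
    simp only [mul_pow, Complex.sq_norm, normSq_apply, sub_re, sub_im, one_re, Complex.one_im]
    ring
  exact abs_le.mpr <|
    abs_le_of_sq_le_sq' (by nlinarith [sq_nonneg (z.re - ‖z‖ ^ 2)]) (by positivity)

lemma Complex.abs_arg_one_sub_le_arcsin {z : ℂ} (hz : ‖z‖ ≤ 1) :
    |arg (1 - z)| ≤ Real.arcsin ‖z‖ := by
  have hre : 0 ≤ (1 - z).re := by
    rw [sub_re, one_re, sub_nonneg]
    exact (re_le_norm z).trans hz
  have hbound : |(1 - z).im / ‖1 - z‖| ≤ ‖z‖ := by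
    rw [abs_div, abs_norm, sub_im, one_im, zero_sub, abs_neg]
    exact div_le_of_le_mul₀ (norm_nonneg _) (norm_nonneg _) z.abs_im_le_norm_mul_norm_one_sub
  obtain ⟨hlo, hhi⟩ := abs_le.mp hbound
  rw [arg_of_re_nonneg hre, abs_le, ← Real.arcsin_neg]
  exact ⟨Real.arcsin_le_arcsin hlo, Real.arcsin_le_arcsin hhi⟩

lemma Complex.hasSum_im_pow_div_succ {z : ℂ} (hz : ‖z‖ < 1) :
    HasSum (fun n : ℕ => (z ^ (n + 1)).im / (n + 1)) (-arg (1 - z)) := by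
  convert hasSum_im (hasSum_taylorSeries_neg_log' hz) using 1
  · funext n
    exact_mod_cast (div_natCast_im (z ^ (n + 1)) (n + 1)).symm
  · rw [neg_im, log_im]

lemma Complex.im_ofReal_mul_exp_mul_I_pow (r θ : ℝ) (n : ℕ) :
    ((r * exp (θ * I)) ^ n).im = r ^ n * Real.sin (n * θ) := by
  rw [mul_pow, ← exp_nat_mul, ← ofReal_pow, im_ofReal_mul, ← mul_assoc, ← ofReal_natCast,
    ← ofReal_mul, exp_ofReal_mul_I_im]

lemma Complex.norm_ofReal_mul_exp_mul_I {r : ℝ} (hr : 0 ≤ r) (θ : ℝ) :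
    ‖r * exp (θ * I)‖ = r := by
  rw [norm_mul, norm_exp_ofReal_mul_I, mul_one, norm_real, Real.norm_of_nonneg hr]

lemma Real.arctan_one_div_sqrt_sq_sub_one {x : ℝ} (hx : 1 < x) :
    arctan (1 / √(x ^ 2 - 1)) = arcsin (1 / x) := by
  have hx0 : 0 < x := by linarith
  rw [arcsin_eq_arctan ⟨by linarith [one_div_pos.mpr hx0], (div_lt_one hx0).mpr hx⟩, div_pow,
    one_pow, one_sub_div (by positivity), sqrt_div' _ (sq_nonneg x), sqrt_sq hx0.le]
  field_simp

/-- The key inequality in Lemma 3.5 and Corollary 2.6: for every prime `p` and `θ ∈ ℝ`,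
`|∑_{n ≥ 1} sin(nθ)/(p^n n)| ≤ arctan(1/√(p²-1))`. -/
theorem sin_series_bound :
    ∀ p : ℕ, p.Prime → ∀ θ : ℝ,
      |∑' n : ℕ, Real.sin ((n + 1) * θ) / ((p : ℝ) ^ (n + 1) * (n + 1))| ≤
        Real.arctan (1 / Real.sqrt ((p : ℝ) ^ 2 - 1)) := by
  intro p hp θ
  have hp1 : (1 : ℝ) < p := by exact_mod_cast hp.one_lt
  set z : ℂ := ((1 / p : ℝ) : ℂ) * exp (θ * I)
  have hz : ‖z‖ = 1 / p := norm_ofReal_mul_exp_mul_I (by positivity) θ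
  have hz1 : ‖z‖ < 1 := hz.trans_lt ((div_lt_one (by positivity)).mpr hp1)
  have hsum : HasSum (fun n : ℕ => Real.sin ((n + 1) * θ) / ((p : ℝ) ^ (n + 1) * (n + 1)))
      (-arg (1 - z)) := by
    convert hasSum_im_pow_div_succ hz1 using 2 with n
    rw [im_ofReal_mul_exp_mul_I_pow, one_div_pow]
    push_cast
    field_simp
  rw [hsum.tsum_eq, abs_neg, Real.arctan_one_div_sqrt_sq_sub_one hp1, ← hz]
  exact abs_arg_one_sub_le_arcsin hz1.le
end
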